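/- If D : Fin N \to {-1,1}^m is an injective design and D' : Fin N \to {-1,1}^m is any other injective design (same N, same m), then \sum_{s=1}^m b_s(D) = \sum_{s=1}^m b_s(D'). That is, the total generalized word count is an invariant of the class of unreplicated N-run m-factor two-level designs. -/

import Mathlib

/-- J-characteristic of a two-level design for a word `g`. -/
def Jchar {N m : ℕ} (D : Fin N → Fin m → ℤ) (g : Finset (Fin m)) : ℤ :=
  ∑ h, ∏ i ∈ g, D h i

/-- Generalized word count `b_s`. -/
def gwc {N m : ℕ} (D : Fin N → Fin m → ℤ) (s : ℕ) : ℚ :=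
  (∑ g ∈ Finset.univ.powerset.filter (fun g : Finset (Fin m) => g.card = s),
    ((Jchar D g : ℤ) : ℚ) ^ 2) / (N : ℚ) ^ 2

/-!
Expanding the squares, `∑_g J_g(D)^2 = ∑_{h,h'} ∑_g ∏_{i∈g} D(h)_i D(h')_i
= ∑_{h,h'} ∏_i (1 + D(h)_i D(h')_i)`, and for `±1` rows the last product is `2^m` when the
rows coincide and `0` otherwise. For an injective design this leaves `N 2^m`, so
`∑_{s=0}^m b_s = 2^m / N`, while `b_0 = 1` for every design.
-/

open Finset

lemma prod_one_add_mul_of_sign {ι : Type*} [Fintype ι] {x y : ι → ℤ}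
    (hx : ∀ i, x i = 1 ∨ x i = -1) (hy : ∀ i, y i = 1 ∨ y i = -1) :
    ∏ i, (1 + x i * y i) = if x = y then 2 ^ Fintype.card ι else 0 := by
  split_ifs with hxy
  · subst hxy
    rw [← card_univ, ← prod_const]
    refine prod_congr rfl fun i _ => ?_
    rcases hx i with h | h <;> simp [h]
  · obtain ⟨i, hi⟩ := Function.ne_iff.mp hxy
    refine prod_eq_zero (mem_univ i) ?_
    rcases hx i with h | h <;> rcases hy i with h' | h' <;> simp_all

lemma Jchar_sq {N m : ℕ} (D : Fin N → Fin m → ℤ) (g : Finset (Fin m)) :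
    Jchar D g ^ 2 = ∑ h, ∑ h', ∏ i ∈ g, D h i * D h' i := by
  simp only [Jchar, sq, sum_mul_sum, prod_mul_distrib]

lemma sum_Jchar_sq {N m : ℕ} {D : Fin N → Fin m → ℤ}
    (hD : ∀ h i, D h i = 1 ∨ D h i = -1) (hinj : Function.Injective D) :
    ∑ g ∈ univ.powerset, Jchar D g ^ 2 = N * 2 ^ m := by
  calc ∑ g ∈ univ.powerset, Jchar D g ^ 2
      = ∑ h, ∑ h', ∏ i, (1 + D h i * D h' i) := by
        simp only [Jchar_sq, prod_one_add]
        rw [sum_comm]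
        exact sum_congr rfl fun h _ => sum_comm
    _ = ∑ h : Fin N, (2 : ℤ) ^ m := by
        simp only [prod_one_add_mul_of_sign (hD _) (hD _), hinj.eq_iff, sum_ite_eq,
          mem_univ, if_true, Fintype.card_fin]
    _ = N * 2 ^ m := by simp

lemma sum_range_gwc {N m : ℕ} {D : Fin N → Fin m → ℤ}
    (hD : ∀ h i, D h i = 1 ∨ D h i = -1) (hinj : Function.Injective D) :
    ∑ s ∈ range (m + 1), gwc D s = (N * 2 ^ m : ℚ) / (N : ℚ) ^ 2 := by
  have hcard : ∀ g ∈ (univ : Finset (Fin m)).powerset, g.card ∈ range (m + 1) := fun g _ =>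
    mem_range_succ_iff.mpr (card_le_univ g |>.trans_eq (Fintype.card_fin m))
  simp only [gwc, ← sum_div, sum_fiberwise_of_maps_to hcard]
  congr 1
  exact_mod_cast sum_Jchar_sq hD hinj

-- Stated as `N^2 / N^2` rather than `1` so that it also covers `N = 0`.
lemma gwc_zero {N m : ℕ} (D : Fin N → Fin m → ℤ) : gwc D 0 = (N : ℚ) ^ 2 / (N : ℚ) ^ 2 := by
  simp [gwc, Jchar, card_eq_zero, filter_eq']

lemma sum_Icc_gwc {N m : ℕ} {D : Fin N → Fin m → ℤ}
    (hD : ∀ h i, D h i = 1 ∨ D h i = -1) (hinj : Function.Injective D) :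
    ∑ s ∈ Icc 1 m, gwc D s = (N * 2 ^ m : ℚ) / (N : ℚ) ^ 2 - (N : ℚ) ^ 2 / (N : ℚ) ^ 2 := by
  rw [← sum_range_gwc hD hinj, range_eq_Ico, sum_eq_sum_Ico_succ_bot (Nat.succ_pos m),
    gwc_zero, zero_add, Nat.succ_eq_add_one, Ico_add_one_right_eq_Icc]
  ring

theorem sum_gwc_invariant_general (m N : ℕ)
    (D D' : Fin N → Fin m → ℤ)
    (hD : ∀ h i, D h i = 1 ∨ D h i = -1)
    (hD' : ∀ h i, D' h i = 1 ∨ D' h i = -1)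
    (hinj : Function.Injective D) (hinj' : Function.Injective D') :
    ∑ s ∈ Finset.Icc 1 m, gwc D s = ∑ s ∈ Finset.Icc 1 m, gwc D' s := by
  rw [sum_Icc_gwc hD hinj, sum_Icc_gwc hD' hinj']

/-- The total generalized word count is an invariant of the class of
unreplicated `N`-run `m`-factor two-level designs: any two injective designs
have equal totals. -/
theorem sum_gwc_invariant (m N : ℕ) (hN : 0 < N)
    (D D' : Fin N → Fin m → ℤ)
    (hD : ∀ h i, D h i = 1 ∨ D h i = -1)
    (hD' : ∀ h i, D' h i = 1 ∨ D' h i = -1)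
    (hinj : Function.Injective D) (hinj' : Function.Injective D') :
    ∑ s ∈ Finset.Icc 1 m, gwc D s = ∑ s ∈ Finset.Icc 1 m, gwc D' s :=
  sum_gwc_invariant_general m N D D' hD hD' hinj hinj'
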